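/- arXiv:1504.05146 — 2 statements merged into one kernel-verified Lean document; each statement's English description precedes it below -/
import Mathlib

section
/- Let G be a finite group and C a conjugacy class of G such that every irreducible character of G takes value 0, 1, or -1 on C. Define χ⁺ as the sum of all irreducible characters taking value 1 on C and χ⁻ as the sum of all irreducible characters taking value -1 on C. Then χ⁺ and χ⁻ are characters of G that agree at every element of G not in C. -/
/-!
The values `χ(g₀) ∈ {0, 1, -1}` turn `χ⁺ - χ⁻` into the column sum `∑_χ χ(g₀) χ`, which by the
second orthogonality relation vanishes off the class of `g₀⁻¹`. If `g₀` is conjugate to `g₀⁻¹`,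
that class is `C`. Otherwise the sum vanishes at `g₀` too; as `∑_χ χ(g₀)²` counts the `χ` with
`χ(g₀) ≠ 0`, every `χ(g₀)` is then `0`.

The second orthogonality relation comes from completeness of the irreducible characters: a class
function `φ` orthogonal to all of them gives the central element `∑ φ(g) g⁻¹` of `ℂ[G]`, which
by Schur's lemma acts on each simple module by a scalar of trace zero, hence by zero, and so
vanishes in the semisimple ring `ℂ[G]`.
-/

open CategoryTheory Finset MonoidAlgebra

universe u

theorem RestrictScalars.moduleFinite (k A M : Type*) [CommSemiring k] [Semiring A]
    [Algebra k A] [Module.Finite k A] [AddCommMonoid M] [Module A M] [Module.Finite A M] :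
    Module.Finite k (RestrictScalars k A M) := by
  let := RestrictScalars.moduleOrig k A M
  have : Module.Finite A (RestrictScalars k A M) := ‹Module.Finite A M›
  exact Module.Finite.trans A _

section SignValues

variable {ι R : Type*} [Ring R] {s : Finset ι} {a : ι → R}

theorem Finset.sum_mul_eq_sum_filter_sub_sum_filter [NeZero (2 : R)] [DecidableEq R]
    (ha : ∀ i ∈ s, a i = 0 ∨ a i = 1 ∨ a i = -1) (b : ι → R) :
    ∑ i ∈ s, a i * b i = ∑ i ∈ s with a i = 1, b i - ∑ i ∈ s with a i = -1, b i := by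
  have : Nontrivial R := ⟨2, 0, two_ne_zero⟩
  have hne : (1 : R) ≠ -1 := fun h => two_ne_zero (α := R) <| by
    rw [← one_add_one_eq_two]
    nth_rewrite 2 [h]
    exact add_neg_cancel 1
  rw [sum_filter, sum_filter, ← sum_sub_distrib]
  refine sum_congr rfl fun i hi => ?_
  rcases ha i hi with h | h | h <;> simp [h, hne, hne.symm]

theorem Finset.eq_zero_of_sum_mul_self_eq_zero [CharZero R]
    (ha : ∀ i ∈ s, a i = 0 ∨ a i = 1 ∨ a i = -1) (hsum : ∑ i ∈ s, a i * a i = 0) :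
    ∀ i ∈ s, a i = 0 := by
  classical
  have hcard : ∑ i ∈ s, a i * a i = #{i ∈ s | a i ≠ 0} := by
    rw [card_eq_sum_ones, Nat.cast_sum, sum_filter]
    refine sum_congr rfl fun i hi => ?_
    rcases ha i hi with h | h | h <;> simp [h]
  rw [hcard, Nat.cast_eq_zero, card_eq_zero, filter_eq_empty_iff] at hsum
  exact fun i hi => not_not.1 (hsum hi)

end SignValues

theorem isConj_inv_iff {G : Type*} [Group G] {a b : G} : IsConj a⁻¹ b⁻¹ ↔ IsConj a b := by
  simp only [isConj_iff, ← conj_inv, inv_inj]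

section Characters

variable {k : Type u} [Field k] {G : Type u} [Group G]

theorem Representation.char_prod {V W : Type*} [AddCommGroup V] [Module k V]
    [FiniteDimensional k V] [AddCommGroup W] [Module k W] [FiniteDimensional k W]
    (ρ : Representation k G V) (σ : Representation k G W) :
    (ρ.prod σ).character = ρ.character + σ.character := by
  ext g
  exact LinearMap.trace_prodMap' (ρ g) (σ g)

theorem FDRep.exists_character_eq_sum (T : Finset (G → k))
    (hT : ∀ f ∈ T, ∃ V : FDRep k G, V.character = f) :
    ∃ W : FDRep k G, W.character = ∑ f ∈ T, f := by
  classical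
  induction T using Finset.induction_on with
  | empty =>
    refine ⟨FDRep.of (Representation.trivial k G PUnit.{u + 1}), ?_⟩
    ext g
    simp [FDRep.character]
  | insert f T hfT ih =>
    obtain ⟨V, rfl⟩ := hT _ (mem_insert_self _ T)
    obtain ⟨W, hW⟩ := ih fun f hf => hT f (mem_insert_of_mem hf)
    refine ⟨FDRep.of (Representation.prod V.ρ W.ρ), ?_⟩
    rw [sum_insert hfT, ← hW]
    exact Representation.char_prod V.ρ W.ρ

open scoped Classical in
theorem FDRep.sum_filter_isConj_character [Fintype G] (V : FDRep k G) (g₀ : G) :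
    ∑ g with IsConj g₀ g, V.character g = #{g | IsConj g₀ g} • V.character g₀ := by
  rw [← sum_const]
  refine sum_congr rfl fun g hg => ?_
  obtain ⟨c, rfl⟩ := isConj_iff.1 (mem_filter.1 hg).2
  exact V.char_conj g₀ c

end Characters

namespace MonoidAlgebra

variable {k G : Type*} [Field k] [Group G] [Fintype G]

noncomputable def classElement (φ : G → k) : MonoidAlgebra k G := ∑ g, single g⁻¹ (φ g)

theorem classElement_mem_center {φ : G → k} (hφ : ∀ x y, φ (y * x * y⁻¹) = φ x) :
    classElement φ ∈ Submonoid.center (MonoidAlgebra k G) := by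
  rw [Submonoid.mem_center_iff]
  intro x
  induction x using MonoidAlgebra.induction_on with
  | of h =>
    simp only [classElement, of_apply, mul_sum, sum_mul, single_mul_single, one_mul, mul_one]
    refine Fintype.sum_equiv (MulAut.conj h) _ _ fun g => ?_
    simp [← mul_assoc, hφ]
  | add x y hx hy => rw [add_mul, mul_add, hx, hy]
  | smul r x hx => rw [smul_mul_assoc, mul_smul_comm, hx]

theorem coeff_classElement (φ : G → k) (g : G) : (classElement φ).coeff g = φ g⁻¹ := by
  classical
  simp [classElement, coeff_sum, Finsupp.single_apply, inv_eq_iff_eq_inv]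

end MonoidAlgebra

theorem Representation.trace_asAlgebraHom_classElement {k G V : Type*} [Field k] [Group G]
    [Fintype G] [AddCommGroup V] [Module k V] (ρ : Representation k G V) (φ : G → k) :
    LinearMap.trace k V (ρ.asAlgebraHom (classElement φ)) = ∑ g, φ g * ρ.character g⁻¹ := by
  simp [classElement, Representation.character]

theorem Representation.asAlgebraHom_eq_zero_of_trace_eq_zero {k G V : Type*} [Field k]
    [IsAlgClosed k] [CharZero k] [Monoid G] [AddCommGroup V] [Module k V]
    [FiniteDimensional k V] (ρ : Representation k G V) [ρ.IsIrreducible]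
    {z : MonoidAlgebra k G} (hz : z ∈ Submonoid.center (MonoidAlgebra k G))
    (htr : LinearMap.trace k V (ρ.asAlgebraHom z) = 0) : ρ.asAlgebraHom z = 0 := by
  obtain ⟨c, hc⟩ := (IsIrreducible.algebraMap_intertwiningMap_bijective_of_isAlgClosed
    (ρ := ρ)).2 (IntertwiningMap.centralAlgebraMul ρ hz)
  have hρz : ρ.asAlgebraHom z = c • 1 := by
    ext v
    simpa using congrArg (fun f : ρ.IntertwiningMap ρ => f v) hc.symm
  have : Nontrivial V := IsSimpleModule.nontrivial (MonoidAlgebra k G) ρ.asModule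
  rw [hρz, map_smul, LinearMap.trace_one, smul_eq_mul, mul_eq_zero] at htr
  rw [hρz, htr.resolve_right (by exact_mod_cast Module.finrank_pos.ne'), zero_smul]

section Orthogonality

variable {k : Type u} [Field k] [IsAlgClosed k] [CharZero k] {G : Type u} [Group G] [Fintype G]

theorem FDRep.simple_of_isIrreducible {V : Type u} [AddCommGroup V] [Module k V]
    [FiniteDimensional k V] (ρ : Representation k G V) [ρ.IsIrreducible] :
    Simple (FDRep.of ρ) := by
  have : Invertible (Nat.card G : k) := invertibleOfNonzero (NeZero.ne _)
  rw [FDRep.simple_iff_char_is_norm_one]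
  have h := Representation.char_orthonormal ρ ρ
  rw [if_pos ⟨Representation.Equiv.refl ρ⟩, inv_mul_eq_one₀ (NeZero.ne _)] at h
  exact h.symm

open scoped Classical in
theorem FDRep.sum_character_mul_character_inv (V W : FDRep k G) [Simple V] [Simple W] :
    ∑ g, V.character g * W.character g⁻¹ =
      if V.character = W.character then (Nat.card G : k) else 0 := by
  have : Invertible (Nat.card G : k) := invertibleOfNonzero (NeZero.ne _)
  have hG : (Nat.card G : k) ≠ 0 := NeZero.ne _
  split_ifs with h
  · have := FDRep.char_orthonormal V V
    rw [if_pos ⟨Iso.refl V⟩, inv_mul_eq_one₀ hG] at this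
    rw [← h, this]
  · have := FDRep.char_orthonormal V W
    rw [if_neg fun ⟨i⟩ => h (FDRep.char_iso i)] at this
    simpa [hG] using this

theorem Representation.asAlgebraHom_classElement_eq_zero {V : Type u} [AddCommGroup V]
    [Module k V] [FiniteDimensional k V] (ρ : Representation k G V) [ρ.IsIrreducible]
    {φ : G → k} (hφ : ∀ x y, φ (y * x * y⁻¹) = φ x)
    (h0 : ∀ V : FDRep k G, Simple V → ∑ g, φ g * V.character g⁻¹ = 0) :
    ρ.asAlgebraHom (classElement φ) = 0 := by
  refine ρ.asAlgebraHom_eq_zero_of_trace_eq_zero (classElement_mem_center hφ) ?_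
  rw [ρ.trace_asAlgebraHom_classElement]
  exact h0 _ (FDRep.simple_of_isIrreducible ρ)

theorem MonoidAlgebra.classElement_smul_eq_zero {φ : G → k}
    (hφ : ∀ x y, φ (y * x * y⁻¹) = φ x)
    (h0 : ∀ V : FDRep k G, Simple V → ∑ g, φ g * V.character g⁻¹ = 0)
    (M : Type u) [AddCommGroup M] [Module (MonoidAlgebra k G) M]
    [IsSimpleModule (MonoidAlgebra k G) M] (m : M) :
    classElement φ • m = 0 := by
  let X := RestrictScalars k (MonoidAlgebra k G) M
  -- instance search does not unify `RestrictScalars.module` with the `AddCommGroup`-based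
  -- structure that `FDRep.of` needs, so the latter is fixed by hand
  let _ : @Module k X _ AddCommGroup.toAddCommMonoid := RestrictScalars.module k _ M
  have : FiniteDimensional k X := RestrictScalars.moduleFinite k _ M
  let ρ : Representation k G X := Representation.ofModule M
  have : ρ.IsIrreducible := (Representation.isSimpleModule_iff_irreducible_ofModule M).1 ‹_›
  let e := RestrictScalars.addEquiv k (MonoidAlgebra k G) M
  have hact := Representation.ofModule_asAlgebraHom_apply_apply M (classElement φ) (e.symm m)
  rw [AddEquiv.apply_symm_apply] at hact
  have h : e.symm (classElement φ • m) = 0 :=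
    hact.symm.trans (LinearMap.congr_fun (ρ.asAlgebraHom_classElement_eq_zero hφ h0) (e.symm m))
  simpa using congrArg e h

theorem FDRep.classFunction_eq_zero_of_orthogonal {φ : G → k}
    (hφ : ∀ x y, φ (y * x * y⁻¹) = φ x)
    (h0 : ∀ V : FDRep k G, Simple V → ∑ g, φ g * V.character g⁻¹ = 0) : φ = 0 := by
  set a := classElement φ
  have hker : ⊤ ≤ LinearMap.ker (LinearMap.toSpanSingleton (MonoidAlgebra k G) _ a) := by
    rw [← IsSemisimpleModule.sSup_simples_eq_top]
    refine sSup_le fun W (_ : IsSimpleModule _ W) w hw => ?_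
    have := classElement_smul_eq_zero hφ h0 W ⟨w, hw⟩
    simpa [← Submonoid.mem_center_iff.1 (classElement_mem_center hφ) w] using
      congrArg Subtype.val this
  have ha : a = 0 := by simpa using hker (Submodule.mem_top (x := 1))
  funext g
  simpa [a, coeff_classElement] using congrArg (fun x => x.coeff g⁻¹) ha

theorem FDRep.sum_sum_mul_character_inv {S : Finset (G → k)}
    (hS : ∀ f : G → k, f ∈ S ↔ ∃ V : FDRep k G, Simple V ∧ f = V.character) (g₀ : G)
    (V : FDRep k G) [Simple V] :
    ∑ g, (∑ f ∈ S, f g₀ * f g) * V.character g⁻¹ = Nat.card G * V.character g₀ := by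
  classical
  have hV : V.character ∈ S := (hS _).2 ⟨V, ‹_›, rfl⟩
  calc ∑ g, (∑ f ∈ S, f g₀ * f g) * V.character g⁻¹
      = ∑ f ∈ S, f g₀ * ∑ g, f g * V.character g⁻¹ := by
        simp only [sum_mul, mul_sum, mul_assoc]
        exact sum_comm
    _ = ∑ f ∈ S, if f = V.character then f g₀ * Nat.card G else 0 := by
        refine sum_congr rfl fun f hf => ?_
        obtain ⟨W, hW, rfl⟩ := (hS f).1 hf
        rw [W.sum_character_mul_character_inv V]
        split_ifs <;> simp
    _ = Nat.card G * V.character g₀ := by rw [sum_ite_eq' S, if_pos hV, mul_comm]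

open scoped Classical in
theorem FDRep.sum_character_mul_character_eq_ite_isConj {S : Finset (G → k)}
    (hS : ∀ f : G → k, f ∈ S ↔ ∃ V : FDRep k G, Simple V ∧ f = V.character) (g₀ g : G) :
    ∑ f ∈ S, f g₀ * f g =
      if IsConj g₀⁻¹ g then (Nat.card G : k) / #{h | IsConj g₀ h} else 0 := by
  set κ : k := Nat.card G / #{h | IsConj g₀ h}
  have hκ : κ * #{h | IsConj g₀ h} = Nat.card G := by
    refine div_mul_cancel₀ _ (Nat.cast_ne_zero.2 (card_ne_zero_of_mem (a := g₀) ?_))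
    exact mem_filter.2 ⟨mem_univ _, .refl g₀⟩
  suffices h : (fun g => ∑ f ∈ S, f g₀ * f g - if IsConj g₀⁻¹ g then κ else 0) = 0 from
    sub_eq_zero.1 (congrFun h g)
  refine FDRep.classFunction_eq_zero_of_orthogonal (fun x y => ?_) fun V _ => ?_
  · have hconj : IsConj x (y * x * y⁻¹) := isConj_iff.2 ⟨y, rfl⟩
    have hS_conj : ∀ f ∈ S, f (y * x * y⁻¹) = f x := fun f hf => by
      obtain ⟨W, -, rfl⟩ := (hS f).1 hf
      exact W.char_conj x y
    have hiff : IsConj g₀⁻¹ (y * x * y⁻¹) ↔ IsConj g₀⁻¹ x :=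
      ⟨fun h => h.trans hconj.symm, fun h => h.trans hconj⟩
    rw [sum_congr rfl fun f hf => by rw [hS_conj f hf]]
    simp only [hiff]
  · have hind : ∑ g, (if IsConj g₀⁻¹ g then κ else 0) * V.character g⁻¹ =
        Nat.card G * V.character g₀ := by
      rw [← Equiv.sum_comp (Equiv.inv G)]
      simp only [Equiv.inv_apply, inv_inv, isConj_inv_iff, ite_mul, zero_mul]
      rw [← sum_filter, ← mul_sum, V.sum_filter_isConj_character, nsmul_eq_mul, ← mul_assoc, hκ]
    simp only [sub_mul, sum_sub_distrib, FDRep.sum_sum_mul_character_inv hS, hind, sub_self]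

end Orthogonality

open scoped Classical in
/-- Let `G` be a finite group and `C` a conjugacy class of `G` on which every
irreducible complex character takes value `0`, `1` or `-1`; let `S` be the
set of irreducible characters of `G`.  Then `χ⁺`, the sum of the irreducible
characters taking value `1` on `C`, and `χ⁻`, the sum of those taking value
`-1` on `C`, are both characters of `G` (characters of finite-dimensional
representations), and they agree at every element of `G` not in `C`. -/
theorem stmt_0 {G : Type} [Group G] [Fintype G] (g₀ : G) (C : Set G)
    (hC : C = {h : G | IsConj g₀ h})
    (hsign : ∀ V : FDRep ℂ G, Simple V → ∀ g ∈ C,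
      V.character g ∈ ({0, 1, -1} : Set ℂ))
    (S : Finset (G → ℂ))
    (hS : ∀ f : G → ℂ, f ∈ S ↔ ∃ V : FDRep ℂ G, Simple V ∧ f = V.character) :
    (∃ Vp : FDRep ℂ G,
        Vp.character = fun g => ∑ f ∈ S.filter (fun f => f g₀ = 1), f g) ∧
    (∃ Vm : FDRep ℂ G,
        Vm.character = fun g => ∑ f ∈ S.filter (fun f => f g₀ = -1), f g) ∧
    ∀ g ∉ C,
      ∑ f ∈ S.filter (fun f => f g₀ = 1), f g =
        ∑ f ∈ S.filter (fun f => f g₀ = -1), f g := by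
  subst hC
  have hsign₀ : ∀ f ∈ S, f g₀ = 0 ∨ f g₀ = 1 ∨ f g₀ = -1 := fun f hf => by
    obtain ⟨V, hV, rfl⟩ := (hS f).1 hf
    simpa using hsign V hV g₀ (IsConj.refl g₀)
  have hchar : ∀ T ⊆ S, ∃ W : FDRep ℂ G, W.character = fun g => ∑ f ∈ T, f g := fun T hT => by
    simp_rw [← Finset.sum_apply]
    refine FDRep.exists_character_eq_sum T fun f hf => ?_
    obtain ⟨V, -, rfl⟩ := (hS f).1 (hT hf)
    exact ⟨V, rfl⟩
  refine ⟨hchar _ (filter_subset _ _), hchar _ (filter_subset _ _), fun g hg => ?_⟩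
  have hcolumn := FDRep.sum_character_mul_character_eq_ite_isConj hS g₀
  have hzero : ∑ f ∈ S, f g₀ * f g = 0 := by
    by_cases hself : IsConj g₀⁻¹ g₀
    · rw [hcolumn, if_neg fun h => hg (hself.symm.trans h)]
    · have h0 := eq_zero_of_sum_mul_self_eq_zero hsign₀ ((hcolumn g₀).trans (if_neg hself))
      exact sum_eq_zero fun f hf => by rw [h0 f hf, zero_mul]
  rw [sum_mul_eq_sum_filter_sub_sum_filter hsign₀] at hzero
  exact sub_eq_zero.1 hzero
end

section
/- Let a ≥ 2 and α₂ > 2a, and set α := (α₂ + 2a - 1, α₂, a, a-1, 1) with a ≥ 4, n := |α| = 2α₂ + 4a - 1. Then for β := (α₂ + 2a, 3, 1^{α₂+2a-4}), the irreducible character of S_n indexed by β takes the value (-1)^{α₂} · 2 on the conjugacy class with cycle type α. Moreover β is not self-conjugate. -/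
/-!
Write `k = α₂ + 2a - 4`, so that `β = (k+4, 3, 1^k)` has beta-set `{2k+5, k+3} ∪ [1, k]` and the
first cycle has length `k+3`. A rim hook of that length can be removed from `β` in exactly two
ways: `2k+5 ↦ k+2` (leg length `1`) leaves `(2, 2, 1^k)`, and `k+3 ↦ 0` (leg length `k`) leaves the
one-row partition `(k+4)`, whose character is identically `1`. From `(2, 2, 1^m)` the cycles of
lengths `α₂`, `a`, `a-1` can each only be removed from the first column, with leg lengths
`α₂-1`, `a-1`, `a-3`, leaving `(1)`. Hence the character value is
`(-1)^k - (-1)^(α₂-1 + a-1 + a-3) = 2 (-1)^α₂`. Finally, `β` is not self-conjugate because its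
first part exceeds its number of parts.
-/

/-- The beta-set (set of first-column hook lengths) of a partition given as a
weakly decreasing list of parts. -/
def betaSet (l : List ℕ) : List ℕ :=
  l.zipIdx.map (fun p => p.1 + (l.length - 1 - p.2))

/-- Recover a partition (weakly decreasing list of positive parts) from a
list of distinct beta-numbers. -/
def fromBeta (b : List ℕ) : List ℕ :=
  let s := List.insertionSort (· ≥ ·) b
  (s.zipIdx.map (fun p => p.1 - (s.length - 1 - p.2))).filter (fun x => x ≠ 0)

/-- `MN β γ` is the value of the irreducible character of the symmetric group
indexed by the partition `β` at the conjugacy class of cycle type `γ`,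
computed via the Murnaghan–Nakayama rule (phrased in terms of beta-numbers:
removing a rim hook of length `q` replaces a beta-number `x` by `x - q`,
the sign being `(-1)` to the number of beta-numbers strictly between
`x - q` and `x`, i.e. the leg length of the hook). -/
def MN : List ℕ → List ℕ → ℤ
  | β, [] => if β = [] then 1 else 0
  | β, q :: γ =>
      ((betaSet β).map (fun x =>
        if q ≤ x ∧ x - q ∉ betaSet β then
          (-1) ^ ((betaSet β).filter (fun y => x - q < y ∧ y < x)).length *
            MN (fromBeta ((x - q) :: (betaSet β).erase x)) γ
        else 0)).sum

/-- `l` is a partition of `m`: a weakly decreasing list of positive parts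
summing to `m`. -/
def IsPartition (l : List ℕ) (m : ℕ) : Prop :=
  l.Pairwise (· ≥ ·) ∧ (∀ i ∈ l, 0 < i) ∧ l.sum = m

/-- The conjugate (transpose) partition: `(conjugate l)_i = #{j : l_j > i}`. -/
def conjugate (l : List ℕ) : List ℕ :=
  (List.range (l.foldr max 0)).map (fun i => (l.filter (fun p => i < p)).length)

@[simp] theorem betaSet_nil : betaSet [] = [] := rfl

@[simp] theorem length_betaSet (l : List ℕ) : (betaSet l).length = l.length := by
  simp [betaSet]

theorem getElem_betaSet (l : List ℕ) (i : ℕ) (h : i < (betaSet l).length) :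
    (betaSet l)[i] = l[i]'(by simpa using h) + (l.length - 1 - i) := by
  simp [betaSet]

theorem betaSet_cons (c : ℕ) (l : List ℕ) : betaSet (c :: l) = (c + l.length) :: betaSet l := by
  refine List.ext_getElem (by simp) fun i h₁ h₂ => ?_
  cases i
  · simp [getElem_betaSet]
  · simp only [getElem_betaSet, List.getElem_cons_succ, List.length_cons]; omega

theorem betaSet_append (l l' : List ℕ) :
    betaSet (l ++ l') = (betaSet l).map (· + l'.length) ++ betaSet l' := by
  induction l with
  | nil => simp
  | cons c l ih =>
    simp only [List.cons_append, betaSet_cons, List.length_append, ih, List.map_cons,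
      List.cons.injEq, and_true]
    omega

theorem mem_betaSet_append {l l' : List ℕ} {y : ℕ} :
    y ∈ betaSet (l ++ l') ↔ l'.length ≤ y ∧ y - l'.length ∈ betaSet l ∨ y ∈ betaSet l' := by
  simp only [betaSet_append, List.mem_append, List.mem_map]
  constructor
  · rintro (⟨z, hz, rfl⟩ | h)
    · exact Or.inl ⟨by omega, by simpa using hz⟩
    · exact Or.inr h
  · rintro (⟨hy, h⟩ | h)
    · exact Or.inl ⟨_, h, by omega⟩
    · exact Or.inr h

theorem mem_betaSet_replicate {k c y : ℕ} :
    y ∈ betaSet (List.replicate k c) ↔ c ≤ y ∧ y < c + k := by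
  induction k with
  | zero => simp
  | succ k ih =>
    simp only [List.replicate_succ, betaSet_cons, List.mem_cons, ih, List.length_replicate]
    omega

theorem mem_betaSet_cons_cons_replicate_one {c₁ c₂ k y : ℕ} :
    y ∈ betaSet (c₁ :: c₂ :: List.replicate k 1) ↔
      y = c₁ + k + 1 ∨ y = c₂ + k ∨ 1 ≤ y ∧ y ≤ k := by
  simp only [betaSet_cons, List.mem_cons, mem_betaSet_replicate, List.length_cons,
    List.length_replicate]
  omega

theorem pairwise_cons_cons_replicate_one {c₁ c₂ : ℕ} (k : ℕ) (h₁ : c₂ ≤ c₁) (h₂ : 1 ≤ c₂) :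
    (c₁ :: c₂ :: List.replicate k 1).Pairwise (· ≥ ·) := by
  simp [List.pairwise_replicate, List.mem_replicate]
  omega

theorem lt_of_mem_betaSet {l : List ℕ} {c y : ℕ} (hl : ∀ a ∈ l, a ≤ c) (hy : y ∈ betaSet l) :
    y < c + l.length := by
  induction l with
  | nil => simp at hy
  | cons a l ih =>
    simp only [betaSet_cons, List.mem_cons] at hy
    simp only [List.mem_cons, forall_eq_or_imp] at hl
    rw [List.length_cons]
    rcases hy with rfl | hy
    · omega
    · have := ih hl.2 hy; omega

theorem pairwise_gt_betaSet {l : List ℕ} (hl : l.Pairwise (· ≥ ·)) :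
    (betaSet l).Pairwise (· > ·) := by
  induction l with
  | nil => simp
  | cons c l ih =>
    rw [List.pairwise_cons] at hl
    rw [betaSet_cons, List.pairwise_cons]
    exact ⟨fun y hy => lt_of_mem_betaSet hl.1 hy, ih hl.2⟩

theorem nodup_betaSet {l : List ℕ} (hl : l.Pairwise (· ≥ ·)) : (betaSet l).Nodup :=
  (pairwise_gt_betaSet hl).imp ne_of_gt

theorem fromBeta_eq_of_perm {b l : List ℕ} (hl : l.Pairwise (· ≥ ·)) (hb : b.Perm (betaSet l)) :
    fromBeta b = l.filter (· ≠ 0) := by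
  have hsort : List.insertionSort (· ≥ ·) b = betaSet l :=
    ((List.perm_insertionSort _ b).trans hb).eq_of_pairwise' (List.pairwise_insertionSort _ b)
      ((pairwise_gt_betaSet hl).imp le_of_lt)
  simp only [fromBeta, hsort]
  congr 1
  refine List.ext_getElem (by simp) fun i h₁ h₂ => ?_
  simp [getElem_betaSet]

def legLength (β : List ℕ) (q x : ℕ) : ℕ :=
  ((betaSet β).filter (fun y => x - q < y ∧ y < x)).length

def removeHook (β : List ℕ) (q x : ℕ) : List ℕ :=
  fromBeta ((x - q) :: (betaSet β).erase x)

theorem MN_cons {β : List ℕ} (hβ : β.Pairwise (· ≥ ·)) (q : ℕ) (γ : List ℕ) :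
    MN β (q :: γ) = ∑ x ∈ (betaSet β).toFinset with q ≤ x ∧ x - q ∉ betaSet β,
      (-1) ^ legLength β q x * MN (removeHook β q x) γ := by
  rw [Finset.sum_filter, List.sum_toFinset _ (nodup_betaSet hβ), MN]
  rfl

theorem legLength_eq_card {β : List ℕ} (hβ : β.Pairwise (· ≥ ·)) (q x : ℕ) :
    legLength β q x = Finset.card {y ∈ (betaSet β).toFinset | x - q < y ∧ y < x} := by
  rw [legLength, ← List.toFinset_card_of_nodup ((nodup_betaSet hβ).filter _), List.toFinset_filter]
  simp

/-- `μ` may end in zero parts, so that its beta-set has as many elements as that of `β`. -/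
theorem removeHook_eq {β μ : List ℕ} {q x : ℕ} (hβ : β.Pairwise (· ≥ ·))
    (hμ : μ.Pairwise (· ≥ ·)) (hq : x - q ∉ betaSet β)
    (hmem : ∀ y, y ∈ betaSet μ ↔ y = x - q ∨ y ≠ x ∧ y ∈ betaSet β) :
    removeHook β q x = μ.filter (· ≠ 0) := by
  have hnodup := nodup_betaSet hβ
  refine fromBeta_eq_of_perm hμ ((List.perm_ext_iff_of_nodup ?_ (nodup_betaSet hμ)).2 fun y => ?_)
  · exact List.nodup_cons.2 ⟨fun h => hq (List.mem_of_mem_erase h), hnodup.erase x⟩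
  · rw [hmem, List.mem_cons, hnodup.mem_erase_iff]

theorem MN_singleton {s : ℕ} {γ : List ℕ} (hs : 0 < s) (hγ : ∀ q ∈ γ, 0 < q)
    (hsum : γ.sum = s) : MN [s] γ = 1 := by
  induction γ generalizing s with
  | nil => simp only [List.sum_nil] at hsum; omega
  | cons q δ ih =>
    simp only [List.mem_cons, forall_eq_or_imp, List.sum_cons] at hγ hsum
    have hsorted : ([s] : List ℕ).Pairwise (· ≥ ·) := List.pairwise_singleton _ s
    have hremovable : {x ∈ (betaSet [s]).toFinset | q ≤ x ∧ x - q ∉ betaSet [s]} = {s} := by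
      ext x; simp [betaSet_cons]; omega
    have hleg : legLength [s] q s = 0 := by simp [legLength, betaSet_cons]
    have hhook : removeHook [s] q s = [s - q].filter (· ≠ 0) :=
      removeHook_eq hsorted (List.pairwise_singleton _ _) (by simp [betaSet_cons]; omega)
        fun y => by simp [betaSet_cons]
    rw [MN_cons hsorted, hremovable, Finset.sum_singleton, hleg, hhook, pow_zero, one_mul]
    rcases Nat.eq_zero_or_pos (s - q) with hsq | hsq
    · cases δ with
      | nil => simp [hsq, MN]
      | cons p δ => simp only [List.sum_cons, List.mem_cons, forall_eq_or_imp] at hsum hγ; omega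
    · simpa [hsq.ne'] using ih hsq hγ.2 (by omega)

theorem MN_cons_three_replicate (k : ℕ) (γ : List ℕ) :
    MN ((k + 4) :: 3 :: List.replicate k 1) ((k + 3) :: γ) =
      -MN (2 :: 2 :: List.replicate k 1) γ + (-1) ^ k * MN [k + 4] γ := by
  set β := (k + 4) :: 3 :: List.replicate k 1
  have hβ : β.Pairwise (· ≥ ·) := pairwise_cons_cons_replicate_one k (by omega) (by omega)
  have hmem (y : ℕ) : y ∈ betaSet β ↔ y = 2 * k + 5 ∨ y = k + 3 ∨ 1 ≤ y ∧ y ≤ k := by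
    rw [mem_betaSet_cons_cons_replicate_one]; omega
  have hremovable : {x ∈ (betaSet β).toFinset | k + 3 ≤ x ∧ x - (k + 3) ∉ betaSet β} =
      {2 * k + 5, k + 3} := by
    ext x; simp only [Finset.mem_filter, List.mem_toFinset, hmem, Finset.mem_insert,
      Finset.mem_singleton]; omega
  have hleg₁ : legLength β (k + 3) (2 * k + 5) = 1 := by
    rw [legLength_eq_card hβ, Finset.card_eq_one]
    exact ⟨k + 3, by ext y; simp [hmem]; omega⟩
  have hleg₂ : legLength β (k + 3) (k + 3) = k := by
    rw [legLength_eq_card hβ, show {y ∈ (betaSet β).toFinset | k + 3 - (k + 3) < y ∧ y < k + 3}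
      = Finset.Icc 1 k by ext y; simp [hmem]; omega]
    simp
  have hhook₁ : removeHook β (k + 3) (2 * k + 5) = 2 :: 2 :: List.replicate k 1 := by
    rw [removeHook_eq hβ (pairwise_cons_cons_replicate_one k le_rfl one_le_two)
      (by rw [hmem]; omega) fun y => by rw [mem_betaSet_cons_cons_replicate_one, hmem]; omega]
    simp
  have hhook₂ : removeHook β (k + 3) (k + 3) = [k + 4] := by
    rw [removeHook_eq (μ := (k + 4) :: List.replicate (k + 1) 0) hβ
      (by simp [List.pairwise_replicate, List.mem_replicate]) (by rw [hmem]; omega)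
      fun y => by
        simp only [betaSet_cons, List.mem_cons, mem_betaSet_replicate, hmem, List.length_replicate]
        omega]
    simp
  rw [MN_cons hβ, hremovable, Finset.sum_pair (by omega), hleg₁, hleg₂, hhook₁, hhook₂]
  ring

theorem MN_two_two_replicate_cons_of_two_le {r : ℕ} (u : ℕ) (hr : 2 ≤ r) (γ : List ℕ) :
    MN (2 :: 2 :: List.replicate (r + 1 + u) 1) ((r + 1) :: γ) =
      (-1) ^ r * MN (2 :: 2 :: List.replicate u 1) γ := by
  set β := 2 :: 2 :: List.replicate (r + 1 + u) 1
  have hβ : β.Pairwise (· ≥ ·) := pairwise_cons_cons_replicate_one _ le_rfl one_le_two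
  have hmem (y : ℕ) : y ∈ betaSet β ↔ y = r + u + 4 ∨ y = r + u + 3 ∨ 1 ≤ y ∧ y ≤ r + 1 + u := by
    rw [mem_betaSet_cons_cons_replicate_one]; omega
  have hremovable : {x ∈ (betaSet β).toFinset | r + 1 ≤ x ∧ x - (r + 1) ∉ betaSet β} =
      {r + 1} := by
    ext x; simp only [Finset.mem_filter, List.mem_toFinset, hmem, Finset.mem_singleton]; omega
  have hleg : legLength β (r + 1) (r + 1) = r := by
    rw [legLength_eq_card hβ, show {y ∈ (betaSet β).toFinset | r + 1 - (r + 1) < y ∧ y < r + 1}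
      = Finset.Icc 1 r by ext y; simp [hmem]; omega]
    simp
  have hhook : removeHook β (r + 1) (r + 1) = 2 :: 2 :: List.replicate u 1 := by
    rw [removeHook_eq (μ := (2 :: 2 :: List.replicate u 1) ++ List.replicate (r + 1) 0) hβ
      (by simp [List.pairwise_append, List.pairwise_replicate, List.mem_replicate]; omega)
      (by rw [hmem]; omega) fun y => by
        rw [mem_betaSet_append, mem_betaSet_cons_cons_replicate_one, mem_betaSet_replicate, hmem,
          List.length_replicate]
        omega]
    simp
  rw [MN_cons hβ, hremovable, Finset.sum_singleton, hleg, hhook]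

theorem MN_two_two_replicate_cons_add_three (k : ℕ) (γ : List ℕ) :
    MN (2 :: 2 :: List.replicate k 1) ((k + 3) :: γ) = (-1) ^ (k + 1) * MN [1] γ := by
  set β := 2 :: 2 :: List.replicate k 1
  have hβ : β.Pairwise (· ≥ ·) := pairwise_cons_cons_replicate_one _ le_rfl one_le_two
  have hmem (y : ℕ) : y ∈ betaSet β ↔ y = k + 3 ∨ y = k + 2 ∨ 1 ≤ y ∧ y ≤ k := by
    rw [mem_betaSet_cons_cons_replicate_one]; omega
  have hremovable : {x ∈ (betaSet β).toFinset | k + 3 ≤ x ∧ x - (k + 3) ∉ betaSet β} =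
      {k + 3} := by
    ext x; simp only [Finset.mem_filter, List.mem_toFinset, hmem, Finset.mem_singleton]; omega
  have hleg : legLength β (k + 3) (k + 3) = k + 1 := by
    rw [legLength_eq_card hβ, show {y ∈ (betaSet β).toFinset | k + 3 - (k + 3) < y ∧ y < k + 3}
      = insert (k + 2) (Finset.Icc 1 k) by ext y; simp [hmem]; omega]
    simp
  have hhook : removeHook β (k + 3) (k + 3) = [1] := by
    rw [removeHook_eq (μ := 1 :: List.replicate (k + 1) 0) hβ
      (by simp [List.pairwise_replicate, List.mem_replicate]) (by rw [hmem]; omega)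
      fun y => by
        simp only [betaSet_cons, List.mem_cons, mem_betaSet_replicate, hmem, List.length_replicate]
        omega]
    simp
  rw [MN_cons hβ, hremovable, Finset.sum_singleton, hleg, hhook]

theorem le_length_conjugate {l : List ℕ} {c : ℕ} (hc : c ∈ l) : c ≤ (conjugate l).length := by
  simpa [conjugate] using List.le_max_of_le' 0 hc le_rfl

theorem conjugate_ne_self {l : List ℕ} {c : ℕ} (hc : c ∈ l) (hlen : l.length < c) :
    conjugate l ≠ l := by
  intro h
  have := le_length_conjugate hc
  rw [h] at this
  omega

theorem stmt_4_general (a α₂ : ℕ) (ha : 4 ≤ a) (hα₂ : 2 * a < α₂) :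
    MN ((α₂ + 2 * a) :: 3 :: List.replicate (α₂ + 2 * a - 4) 1)
        [α₂ + 2 * a - 1, α₂, a, a - 1, 1] = (-1) ^ α₂ * 2 ∧
    conjugate ((α₂ + 2 * a) :: 3 :: List.replicate (α₂ + 2 * a - 4) 1) ≠
      (α₂ + 2 * a) :: 3 :: List.replicate (α₂ + 2 * a - 4) 1 := by
  refine ⟨?_, conjugate_ne_self List.mem_cons_self
    (by simp only [List.length_cons, List.length_replicate]; omega)⟩
  obtain ⟨b, rfl⟩ : ∃ b, a = b + 4 := ⟨a - 4, by omega⟩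
  obtain ⟨r, rfl⟩ : ∃ r, α₂ = r + 1 := ⟨α₂ - 1, by omega⟩
  rw [show r + 1 + 2 * (b + 4) = r + 1 + (2 * b + 4) + 4 by ring, Nat.add_sub_cancel,
    Nat.add_sub_assoc (by norm_num), show b + 4 - 1 = b + 3 by omega,
    MN_cons_three_replicate, MN_two_two_replicate_cons_of_two_le _ (by omega),
    show 2 * b + 4 = b + 3 + 1 + b by ring, MN_two_two_replicate_cons_of_two_le _ (by omega),
    MN_two_two_replicate_cons_add_three, MN_singleton one_pos (by simp) (by simp),
    MN_singleton (by omega) (by simp) (by simp only [List.sum_cons, List.sum_nil]; omega)]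
  have hsq : ((-1 : ℤ) ^ b) ^ 2 = 1 := by rw [← pow_mul, pow_mul']; simp
  linear_combination (-2 * (-1 : ℤ) ^ r) * hsq

/-- Let `a ≥ 4` (in particular `a ≥ 2`) and `α₂ > 2a`, and set
`α = (α₂+2a-1, α₂, a, a-1, 1)`. Then for `β = (α₂+2a, 3, 1^{α₂+2a-4})` the
irreducible character of `S_n` indexed by `β` takes the value `(-1)^{α₂}·2`
at the class of cycle type `α`, and `β` is not self-conjugate. -/
theorem stmt_4 (a α₂ : ℕ) (ha2 : 2 ≤ a) (ha : 4 ≤ a) (hα₂ : 2 * a < α₂) :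
    MN ((α₂ + 2 * a) :: 3 :: List.replicate (α₂ + 2 * a - 4) 1)
        [α₂ + 2 * a - 1, α₂, a, a - 1, 1] = (-1) ^ α₂ * 2 ∧
    conjugate ((α₂ + 2 * a) :: 3 :: List.replicate (α₂ + 2 * a - 4) 1) ≠
      (α₂ + 2 * a) :: 3 :: List.replicate (α₂ + 2 * a - 4) 1 :=
  stmt_4_general a α₂ ha hα₂
end
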